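/- arXiv:2501.15301 — 2 statements merged into one kernel-verified Lean document; each statement's English description precedes it below -/
import Mathlib

section
/- If s : 𝒳 → 𝒮 and t : 𝒴 → 𝒯 are both sufficient, then for every R ≥ 0 the information-bottleneck curve is preserved: ϑ_p(R) = ϑ_{pST}(R), where pST is the joint pmf on 𝒮 × 𝒯 induced by p. -/
/-!
Collapse the two coordinates one at a time, `(X, Y) ↦ (S, Y) ↦ (S, T)`. For each step, every
kernel for one joint law is matched by a kernel for the other with the same relevance `I(U;·)` and
no larger rate, so both curves are suprema of the same set.

Collapsing `Y` to `T = t(Y)` changes neither the kernels nor `I(U;X)`, and `I(U;Y) = I(U;T)`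
because sufficiency of `t` makes `U - T - Y` a Markov chain. Collapsing `X` to `S = s(X)`: a
kernel on `𝒮` composed with `s` is a kernel on `𝒳` with the same two informations; conversely,
averaging a kernel on `𝒳` over the fibres of `s` gives a kernel on `𝒮` with `I(U;S) ≤ I(U;X)` by
data processing, and with the same joint law of `(U, Y)` because `p(y | x)` depends on `x` only
through `s(x)`.
-/

open Finset

noncomputable section
open scoped Classical

variable {𝒳 𝒴 𝒮 𝒯 : Type*}

/-- Marginal of a joint pmf on the first coordinate. -/
def margX [Fintype 𝒴] (p : 𝒳 × 𝒴 → ℝ) (x : 𝒳) : ℝ := ∑ y, p (x, y)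

/-- Marginal of a joint pmf on the second coordinate. -/
def margY [Fintype 𝒳] (p : 𝒳 × 𝒴 → ℝ) (y : 𝒴) : ℝ := ∑ x, p (x, y)

/-- Distribution of `S = s(X)`. -/
def margS [Fintype 𝒳] [Fintype 𝒴] (p : 𝒳 × 𝒴 → ℝ) (s : 𝒳 → 𝒮) (s0 : 𝒮) : ℝ :=
  ∑ x ∈ Finset.univ.filter (fun x => s x = s0), margX p x

/-- Distribution of `T = t(Y)`. -/
def margT [Fintype 𝒳] [Fintype 𝒴] (p : 𝒳 × 𝒴 → ℝ) (t : 𝒴 → 𝒯) (t0 : 𝒯) : ℝ :=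
  ∑ y ∈ Finset.univ.filter (fun y => t y = t0), margY p y

/-- Joint distribution of `(S, T) = (s(X), t(Y))`. -/
def margST [Fintype 𝒳] [Fintype 𝒴] (p : 𝒳 × 𝒴 → ℝ) (s : 𝒳 → 𝒮) (t : 𝒴 → 𝒯)
    (w : 𝒮 × 𝒯) : ℝ :=
  ∑ x ∈ Finset.univ.filter (fun x => s x = w.1),
    ∑ y ∈ Finset.univ.filter (fun y => t y = w.2), p (x, y)

/-- `q` is a probability mass function. -/
def IsPMF {Z : Type*} [Fintype Z] (q : Z → ℝ) : Prop := (∀ z, 0 ≤ q z) ∧ ∑ z, q z = 1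

/-- `s` is a sufficient statistic of `X` for `Y` (Markov chain `X - S - Y`). -/
def SuffS [Fintype 𝒴] (p : 𝒳 × 𝒴 → ℝ) (s : 𝒳 → 𝒮) : Prop :=
  ∀ x x' y, s x = s x' → p (x, y) * margX p x' = p (x', y) * margX p x

/-- `t` is a sufficient statistic of `Y` for `X` (Markov chain `X - T - Y`). -/
def SuffT [Fintype 𝒳] (p : 𝒳 × 𝒴 → ℝ) (t : 𝒴 → 𝒯) : Prop :=
  ∀ x y y', t y = t y' → p (x, y) * margY p y' = p (x, y') * margY p y

/-- Mutual information of a joint pmf on `A × B`. -/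
def mutInfo {A B : Type*} [Fintype A] [Fintype B] (q : A × B → ℝ) : ℝ :=
  ∑ z : A × B, if 0 < q z then
    q z * Real.log (q z / ((∑ b, q (z.1, b)) * (∑ a, q (a, z.2)))) else 0

/-- Shannon entropy of a pmf on a finite type. -/
def entropy {W : Type*} [Fintype W] (r : W → ℝ) : ℝ :=
  -∑ w, if 0 < r w then r w * Real.log (r w) else 0

/-- Wyner's common information of a joint pmf `m` on `A × B`. -/
def wynerCI {A B : Type*} [Fintype A] [Fintype B] (m : A × B → ℝ) : ℝ :=
  sInf { c | ∃ (n : ℕ) (q : A × B × Fin n → ℝ),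
    IsPMF q ∧
    (∀ a b, ∑ w, q (a, b, w) = m (a, b)) ∧
    (∀ a b w, q (a, b, w) * (∑ a', ∑ b', q (a', b', w)) =
      (∑ b', q (a, b', w)) * (∑ a', q (a', b, w))) ∧
    c = mutInfo (fun z : Fin n × (A × B) => q (z.2.1, z.2.2, z.1)) }

/-- Gács–Körner common information of a joint pmf `m` on `A × B`. -/
def gkCI {A B : Type*} [Fintype A] [Fintype B] (m : A × B → ℝ) : ℝ :=
  sSup { c | ∃ (n : ℕ) (f : A → Fin n) (g : B → Fin n),
    (∑ z : A × B, if f z.1 ≠ g z.2 then m z else 0) = 0 ∧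
    c = entropy (fun w : Fin n =>
      ∑ a ∈ Finset.univ.filter (fun a => f a = w), ∑ b, m (a, b)) }

/-- Information-bottleneck Lagrangian value. -/
def ibL {A B : Type*} [Fintype A] [Fintype B] (m : A × B → ℝ) (β : ℝ) : ℝ :=
  sInf { c | ∃ (n : ℕ) (r : A → Fin n → ℝ),
    (∀ a u, 0 ≤ r a u) ∧ (∀ a, ∑ u, r a u = 1) ∧
    c = mutInfo (fun z : Fin n × A => r z.2 z.1 * ∑ b, m (z.2, b))
        - β * mutInfo (fun z : Fin n × B => ∑ a, r a z.1 * m (a, z.2)) }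

/-- Information-bottleneck curve. -/
def ibCurve {A B : Type*} [Fintype A] [Fintype B] (m : A × B → ℝ) (R : ℝ) : ℝ :=
  sSup { c | ∃ (n : ℕ) (r : A → Fin n → ℝ),
    (∀ a u, 0 ≤ r a u) ∧ (∀ a, ∑ u, r a u = 1) ∧
    mutInfo (fun z : Fin n × A => r z.2 z.1 * ∑ b, m (z.2, b)) ≤ R ∧
    c = mutInfo (fun z : Fin n × B => ∑ a, r a z.1 * m (a, z.2)) }

open Real InformationTheory

lemma sub_le_mul_log_div {a b : ℝ} (ha : 0 ≤ a) (hb : 0 ≤ b) (hab : 0 < a → 0 < b) :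
    a - b ≤ a * log (a / b) := by
  rcases ha.eq_or_lt with rfl | ha
  · simpa using hb
  have hb := hab ha
  have h := mul_nonneg hb.le (klFun_nonneg (div_nonneg ha.le hb.le))
  rw [klFun_apply] at h
  field_simp at h
  linarith

lemma sum_mul_log_div_nonneg {ι : Type*} [Fintype ι] {f g : ι → ℝ} (hf : 0 ≤ f) (hg : 0 ≤ g)
    (hfg : ∀ i, 0 < f i → 0 < g i) (hsum : ∑ i, g i ≤ ∑ i, f i) :
    0 ≤ ∑ i, f i * log (f i / g i) := by
  have := sum_le_sum fun i (_ : i ∈ univ) => sub_le_mul_log_div (hf i) (hg i) (hfg i)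
  rw [sum_sub_distrib] at this
  linarith

section MutualInformation

variable {A B C : Type*}

def mapSnd [Fintype B] (q : A × B → ℝ) (f : B → C) : A × C → ℝ :=
  fun w => ∑ b ∈ univ.filter (fun b => f b = w.2), q (w.1, b)

def mapFst [Fintype A] (q : A × B → ℝ) (g : A → C) : C × B → ℝ :=
  fun w => ∑ a ∈ univ.filter (fun a => g a = w.1), q (a, w.2)

lemma margX_pos_of_pos [Fintype B] {q : A × B → ℝ} (hq : 0 ≤ q) {a : A} {b : B}
    (h : 0 < q (a, b)) : 0 < margX q a :=
  h.trans_le (single_le_sum (fun b _ => hq (a, b)) (mem_univ b))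

lemma margY_pos_of_pos [Fintype A] {q : A × B → ℝ} (hq : 0 ≤ q) {a : A} {b : B}
    (h : 0 < q (a, b)) : 0 < margY q b :=
  h.trans_le (single_le_sum (fun a _ => hq (a, b)) (mem_univ a))

lemma mapSnd_nonneg [Fintype B] {q : A × B → ℝ} (hq : 0 ≤ q) (f : B → C) : 0 ≤ mapSnd q f :=
  fun _ => sum_nonneg fun _ _ => hq _

lemma mapFst_nonneg [Fintype A] {q : A × B → ℝ} (hq : 0 ≤ q) (g : A → C) : 0 ≤ mapFst q g :=
  fun _ => sum_nonneg fun _ _ => hq _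

lemma le_mapSnd [Fintype B] {q : A × B → ℝ} (hq : 0 ≤ q) (f : B → C) (a : A) (b : B) :
    q (a, b) ≤ mapSnd q f (a, f b) :=
  single_le_sum (fun b _ => hq (a, b)) (mem_filter.mpr ⟨mem_univ b, rfl⟩)

lemma margX_mapSnd [Fintype B] [Fintype C] (q : A × B → ℝ) (f : B → C) :
    margX (mapSnd q f) = margX q :=
  funext fun a => sum_fiberwise univ f fun b => q (a, b)

lemma margY_mapSnd [Fintype A] [Fintype B] (q : A × B → ℝ) (f : B → C) (c : C) :
    margY (mapSnd q f) c = ∑ b ∈ univ.filter (fun b => f b = c), margY q b := by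
  simp only [margY, mapSnd]
  exact sum_comm

lemma margX_mapFst [Fintype A] [Fintype B] (q : A × B → ℝ) (g : A → C) (c : C) :
    margX (mapFst q g) c = ∑ a ∈ univ.filter (fun a => g a = c), margX q a := by
  simp only [margX, mapFst]
  exact sum_comm

lemma margY_mapFst [Fintype A] [Fintype C] (q : A × B → ℝ) (g : A → C) :
    margY (mapFst q g) = margY q :=
  funext fun b => sum_fiberwise univ g fun a => q (a, b)

lemma margY_le_margY_mapSnd [Fintype A] [Fintype B] {q : A × B → ℝ} (hq : 0 ≤ q) (f : B → C)
    (b : B) : margY q b ≤ margY (mapSnd q f) (f b) := by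
  rw [margY_mapSnd]
  exact single_le_sum (fun b _ => sum_nonneg fun a _ => hq (a, b))
    (mem_filter.mpr ⟨mem_univ b, rfl⟩)

lemma sum_mapSnd_mul [Fintype A] [Fintype B] [Fintype C] (q : A × B → ℝ) (f : B → C)
    (L : A × C → ℝ) : ∑ w, mapSnd q f w * L w = ∑ z, q z * L (z.1, f z.2) := by
  simp only [Fintype.sum_prod_type, mapSnd, sum_mul]
  refine sum_congr rfl fun a _ => ?_
  rw [← sum_fiberwise univ f]
  exact sum_congr rfl fun c _ => sum_congr rfl fun b hb => by rw [(mem_filter.mp hb).2]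

lemma mutInfo_eq_sum [Fintype A] [Fintype B] {q : A × B → ℝ} (hq : 0 ≤ q) :
    mutInfo q = ∑ z, q z * log (q z / (margX q z.1 * margY q z.2)) := by
  refine sum_congr rfl fun z _ => ?_
  rcases (show 0 ≤ q z from hq z).eq_or_lt with h | h
  · simp [← h]
  · rw [if_pos h]; rfl

lemma mutInfo_mapSnd [Fintype A] [Fintype B] [Fintype C] {q : A × B → ℝ} (hq : 0 ≤ q)
    (f : B → C) : mutInfo (mapSnd q f) = ∑ z, q z *
      log (mapSnd q f (z.1, f z.2) / (margX q z.1 * margY (mapSnd q f) (f z.2))) := by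
  rw [mutInfo_eq_sum (mapSnd_nonneg hq f), sum_mapSnd_mul, margX_mapSnd]

lemma mapSnd_mul_margY [Fintype A] [Fintype B] {q : A × B → ℝ} {f : B → C} (hf : SuffT q f)
    (a : A) (b : B) : mapSnd q f (a, f b) * margY q b = q (a, b) * margY (mapSnd q f) (f b) := by
  rw [margY_mapSnd, mapSnd, sum_mul, mul_sum]
  exact sum_congr rfl fun b' hb' => hf a b' b (mem_filter.mp hb').2

lemma mutInfo_mapSnd_of_suffT [Fintype A] [Fintype B] [Fintype C] {q : A × B → ℝ} (hq : 0 ≤ q)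
    {f : B → C} (hf : SuffT q f) : mutInfo (mapSnd q f) = mutInfo q := by
  rw [mutInfo_mapSnd hq, mutInfo_eq_sum hq]
  refine sum_congr rfl fun ⟨a, b⟩ _ => ?_
  rcases (show 0 ≤ q (a, b) from hq (a, b)).eq_or_lt with h | h
  · simp [← h]
  have hA := margX_pos_of_pos hq h
  have hB := margY_pos_of_pos hq h
  have hC := hB.trans_le (margY_le_margY_mapSnd hq f b)
  dsimp only
  congr 2
  rw [div_eq_div_iff (by positivity) (by positivity)]
  linear_combination margX q a * mapSnd_mul_margY hf a b

lemma mutInfo_mapSnd_le [Fintype A] [Fintype B] [Fintype C] {q : A × B → ℝ} (hq : 0 ≤ q)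
    (f : B → C) : mutInfo (mapSnd q f) ≤ mutInfo q := by
  -- `I(A;B) - I(A;f(B))` is the divergence of `q` from `q(b) q(a, f b) / q(f b)`
  set g : A × B → ℝ := fun z =>
    margY q z.2 * mapSnd q f (z.1, f z.2) / margY (mapSnd q f) (f z.2)
  have hg : 0 ≤ g := fun z =>
    div_nonneg (mul_nonneg (sum_nonneg fun a _ => hq _) (mapSnd_nonneg hq f _))
      (sum_nonneg fun a _ => mapSnd_nonneg hq f _)
  have hpos : ∀ z, 0 < q z → 0 < g z := fun ⟨a, b⟩ h => by
    have hB := margY_pos_of_pos hq h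
    exact div_pos (mul_pos hB (h.trans_le (le_mapSnd hq f a b)))
      (hB.trans_le (margY_le_margY_mapSnd hq f b))
  have hsum : ∑ z, g z ≤ ∑ z, q z := by
    rw [Fintype.sum_prod_type_right, Fintype.sum_prod_type_right]
    refine sum_le_sum fun b _ => ?_
    have hgb : ∑ a, g (a, b) =
        margY q b * (margY (mapSnd q f) (f b) / margY (mapSnd q f) (f b)) := by
      simp only [g, mul_div_assoc, ← mul_sum, ← sum_div]
      rfl
    rw [hgb]
    exact mul_le_of_le_one_right (sum_nonneg fun a _ => hq _) (div_self_le_one _)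
  have hdiff : mutInfo q - mutInfo (mapSnd q f) = ∑ z, q z * log (q z / g z) := by
    rw [mutInfo_mapSnd hq, mutInfo_eq_sum hq, ← sum_sub_distrib]
    refine sum_congr rfl fun ⟨a, b⟩ _ => ?_
    rcases (show 0 ≤ q (a, b) from hq (a, b)).eq_or_lt with h | h
    · simp [← h]
    have hA := margX_pos_of_pos hq h
    have hB := margY_pos_of_pos hq h
    have hQ := h.trans_le (le_mapSnd hq f a b)
    have hC := hB.trans_le (margY_le_margY_mapSnd hq f b)
    rw [← mul_sub, ← log_div (by positivity) (by positivity)]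
    congr 2
    simp only [g]
    field_simp
  linarith [sum_mul_log_div_nonneg hq hg hpos hsum]

end MutualInformation

section InformationBottleneck

variable {A B C A' B' : Type*} {n : ℕ}

def IsStochastic (r : A → Fin n → ℝ) : Prop := (∀ a u, 0 ≤ r a u) ∧ ∀ a, ∑ u, r a u = 1

/-- The joint law of `(U, A)` when `U` is drawn from `A` through the kernel `r`. -/
def ibJointIn [Fintype B] (m : A × B → ℝ) (r : A → Fin n → ℝ) : Fin n × A → ℝ :=
  fun z => r z.2 z.1 * margX m z.2

/-- The joint law of `(U, B)` when `U` is drawn from `A` through the kernel `r`. -/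
def ibJointOut [Fintype A] (m : A × B → ℝ) (r : A → Fin n → ℝ) : Fin n × B → ℝ :=
  fun z => ∑ a, r a z.1 * m (a, z.2)

def ibCurveSet [Fintype A] [Fintype B] (m : A × B → ℝ) (R : ℝ) : Set ℝ :=
  {c | ∃ (n : ℕ) (r : A → Fin n → ℝ), IsStochastic r ∧
    mutInfo (ibJointIn m r) ≤ R ∧ c = mutInfo (ibJointOut m r)}

lemma ibCurve_eq_sSup [Fintype A] [Fintype B] (m : A × B → ℝ) (R : ℝ) :
    ibCurve m R = sSup (ibCurveSet m R) := by
  simp only [ibCurve, ibCurveSet, IsStochastic, and_assoc]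
  rfl

def IBSimulates [Fintype A] [Fintype B] [Fintype A'] [Fintype B'] (m : A × B → ℝ)
    (m' : A' × B' → ℝ) : Prop :=
  ∀ (n : ℕ) (r : A → Fin n → ℝ), IsStochastic r → ∃ r' : A' → Fin n → ℝ, IsStochastic r' ∧
    mutInfo (ibJointIn m' r') ≤ mutInfo (ibJointIn m r) ∧
    mutInfo (ibJointOut m' r') = mutInfo (ibJointOut m r)

lemma IBSimulates.ibCurveSet_subset [Fintype A] [Fintype B] [Fintype A'] [Fintype B']
    {m : A × B → ℝ} {m' : A' × B' → ℝ} (h : IBSimulates m m') (R : ℝ) :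
    ibCurveSet m R ⊆ ibCurveSet m' R := by
  rintro c ⟨n, r, hr, hR, rfl⟩
  obtain ⟨r', hr', hle, heq⟩ := h n r hr
  exact ⟨n, r', hr', hle.trans hR, heq.symm⟩

lemma ibCurve_eq_of_simulates [Fintype A] [Fintype B] [Fintype A'] [Fintype B']
    {m : A × B → ℝ} {m' : A' × B' → ℝ} (h : IBSimulates m m') (h' : IBSimulates m' m) (R : ℝ) :
    ibCurve m R = ibCurve m' R := by
  rw [ibCurve_eq_sSup, ibCurve_eq_sSup, (h.ibCurveSet_subset R).antisymm (h'.ibCurveSet_subset R)]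

lemma ibJointIn_nonneg [Fintype B] {m : A × B → ℝ} (hm : 0 ≤ m) {r : A → Fin n → ℝ}
    (hr : IsStochastic r) : 0 ≤ ibJointIn m r :=
  fun _ => mul_nonneg (hr.1 _ _) (sum_nonneg fun _ _ => hm _)

lemma ibJointOut_nonneg [Fintype A] {m : A × B → ℝ} (hm : 0 ≤ m) {r : A → Fin n → ℝ}
    (hr : IsStochastic r) : 0 ≤ ibJointOut m r :=
  fun _ => sum_nonneg fun _ _ => mul_nonneg (hr.1 _ _) (hm _)

lemma margY_ibJointIn [Fintype B] (m : A × B → ℝ) {r : A → Fin n → ℝ} (hr : IsStochastic r) :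
    margY (ibJointIn m r) = margX m :=
  funext fun a => by simp only [margY, ibJointIn, ← sum_mul, hr.2, one_mul]

lemma margY_ibJointOut [Fintype A] (m : A × B → ℝ) {r : A → Fin n → ℝ} (hr : IsStochastic r) :
    margY (ibJointOut m r) = margY m :=
  funext fun b => by
    simp only [margY, ibJointOut]
    rw [sum_comm]
    simp only [← sum_mul, hr.2, one_mul]

lemma suffT_ibJointOut [Fintype A] [Fintype B] {m : A × B → ℝ} {f : B → C} (hf : SuffT m f)
    {r : A → Fin n → ℝ} (hr : IsStochastic r) : SuffT (ibJointOut m r) f := by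
  intro u b b' hb
  simp only [margY_ibJointOut m hr, ibJointOut, sum_mul, mul_assoc]
  exact sum_congr rfl fun a _ => by rw [hf a b b' hb]

lemma suffT_mapFst [Fintype A] [Fintype B] [Fintype A'] {m : A × B → ℝ} {f : B → C}
    (hf : SuffT m f) (g : A → A') : SuffT (mapFst m g) f := by
  intro c b b' hb
  simp only [margY_mapFst, mapFst, sum_mul]
  exact sum_congr rfl fun a _ => hf a b b' hb

lemma ibJointIn_mapSnd [Fintype B] [Fintype C] (m : A × B → ℝ) (f : B → C)
    (r : A → Fin n → ℝ) : ibJointIn (mapSnd m f) r = ibJointIn m r := by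
  unfold ibJointIn
  rw [margX_mapSnd]

lemma ibJointOut_mapSnd [Fintype A] [Fintype B] (m : A × B → ℝ) (f : B → C)
    (r : A → Fin n → ℝ) : ibJointOut (mapSnd m f) r = mapSnd (ibJointOut m r) f :=
  funext fun z => by
    simp only [ibJointOut, mapSnd, mul_sum]
    exact sum_comm

lemma mutInfo_ibJointOut_mapSnd [Fintype A] [Fintype B] [Fintype C] {m : A × B → ℝ}
    (hm : 0 ≤ m) {f : B → C} (hf : SuffT m f) {r : A → Fin n → ℝ} (hr : IsStochastic r) :
    mutInfo (ibJointOut (mapSnd m f) r) = mutInfo (ibJointOut m r) := by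
  rw [ibJointOut_mapSnd,
    mutInfo_mapSnd_of_suffT (ibJointOut_nonneg hm hr) (suffT_ibJointOut hf hr)]

lemma ibCurve_mapSnd [Fintype A] [Fintype B] [Fintype C] {m : A × B → ℝ} (hm : 0 ≤ m)
    {f : B → C} (hf : SuffT m f) (R : ℝ) : ibCurve (mapSnd m f) R = ibCurve m R :=
  ibCurve_eq_of_simulates
    (fun _ r hr => ⟨r, hr, (congrArg mutInfo (ibJointIn_mapSnd m f r)).ge,
      (mutInfo_ibJointOut_mapSnd hm hf hr).symm⟩)
    (fun _ r hr => ⟨r, hr, (congrArg mutInfo (ibJointIn_mapSnd m f r)).le,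
      mutInfo_ibJointOut_mapSnd hm hf hr⟩) R

lemma IsStochastic.comp {r : C → Fin n → ℝ} (hr : IsStochastic r) (g : A → C) :
    IsStochastic (fun a => r (g a)) :=
  ⟨fun _ => hr.1 _, fun _ => hr.2 _⟩

lemma ibJointOut_comp [Fintype A] [Fintype C] (m : A × B → ℝ) (g : A → C) (r : C → Fin n → ℝ) :
    ibJointOut m (fun a => r (g a)) = ibJointOut (mapFst m g) r :=
  funext fun z => by
    simp only [ibJointOut, mapFst, mul_sum]
    rw [← sum_fiberwise univ g]
    exact sum_congr rfl fun c _ => sum_congr rfl fun a ha => by rw [(mem_filter.mp ha).2]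

lemma mapSnd_ibJointIn_comp [Fintype A] [Fintype B] (m : A × B → ℝ) (g : A → C)
    (r : C → Fin n → ℝ) : mapSnd (ibJointIn m (fun a => r (g a))) g = ibJointIn (mapFst m g) r :=
  funext fun z => by
    simp only [mapSnd, ibJointIn, margX_mapFst, mul_sum]
    exact sum_congr rfl fun a ha => by rw [(mem_filter.mp ha).2]

lemma suffT_ibJointIn_comp [Fintype B] (m : A × B → ℝ) (g : A → C) {r : C → Fin n → ℝ}
    (hr : IsStochastic r) : SuffT (ibJointIn m (fun a => r (g a))) g := by
  intro u a a' ha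
  rw [margY_ibJointIn m (hr.comp g)]
  simp only [ibJointIn, ha]
  ring

lemma mutInfo_ibJointIn_comp [Fintype A] [Fintype B] [Fintype C] {m : A × B → ℝ} (hm : 0 ≤ m)
    (g : A → C) {r : C → Fin n → ℝ} (hr : IsStochastic r) :
    mutInfo (ibJointIn m (fun a => r (g a))) = mutInfo (ibJointIn (mapFst m g) r) := by
  rw [← mapSnd_ibJointIn_comp,
    mutInfo_mapSnd_of_suffT (ibJointIn_nonneg hm (hr.comp g)) (suffT_ibJointIn_comp m g hr)]

lemma mapFst_mul_margX [Fintype A] [Fintype B] {m : A × B → ℝ} {g : A → C} (hg : SuffS m g)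
    (a : A) (b : B) : mapFst m g (g a, b) * margX m a = m (a, b) * margX (mapFst m g) (g a) := by
  rw [margX_mapFst, mapFst, sum_mul, mul_sum]
  exact sum_congr rfl fun a' ha' => hg a' a b (mem_filter.mp ha').2

lemma eq_zero_of_margX_mapFst_eq_zero [Fintype A] [Fintype B] {m : A × B → ℝ} (hm : 0 ≤ m)
    {g : A → C} {c : C} (h : margX (mapFst m g) c = 0) {a : A} (ha : g a = c) (b : B) :
    m (a, b) = 0 := by
  rw [margX_mapFst] at h
  have hA := (sum_eq_zero_iff_of_nonneg fun a _ => sum_nonneg fun b _ => hm (a, b)).1 h a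
    (mem_filter.mpr ⟨mem_univ a, ha⟩)
  exact (sum_eq_zero_iff_of_nonneg fun b _ => hm (a, b)).1 hA b (mem_univ b)

/-- The conditional law of `U` given `g(A) = c`; on a fiber of mass zero any row will do. -/
def fiberAverage [Fintype A] [Fintype B] (m : A × B → ℝ) (g : A → C) (r : A → Fin n → ℝ)
    (a₀ : A) : C → Fin n → ℝ :=
  fun c u => if margX (mapFst m g) c = 0 then r a₀ u
    else (∑ a ∈ univ.filter (fun a => g a = c), r a u * margX m a) / margX (mapFst m g) c

lemma fiberAverage_mul_margX [Fintype A] [Fintype B] {m : A × B → ℝ} (hm : 0 ≤ m) (g : A → C)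
    (r : A → Fin n → ℝ) (a₀ : A) (c : C) (u : Fin n) :
    fiberAverage m g r a₀ c u * margX (mapFst m g) c =
      ∑ a ∈ univ.filter (fun a => g a = c), r a u * margX m a := by
  unfold fiberAverage
  split_ifs with h
  · rw [h, mul_zero]
    refine (sum_eq_zero fun a ha => ?_).symm
    rw [margX, sum_eq_zero fun b _ => eq_zero_of_margX_mapFst_eq_zero hm h (mem_filter.mp ha).2 b,
      mul_zero]
  · exact div_mul_cancel₀ _ h

lemma isStochastic_fiberAverage [Fintype A] [Fintype B] {m : A × B → ℝ} (hm : 0 ≤ m) (g : A → C)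
    {r : A → Fin n → ℝ} (hr : IsStochastic r) (a₀ : A) : IsStochastic (fiberAverage m g r a₀) := by
  refine ⟨fun c u => ?_, fun c => ?_⟩ <;> unfold fiberAverage <;> split_ifs with h
  · exact hr.1 a₀ u
  · exact div_nonneg (sum_nonneg fun a _ => mul_nonneg (hr.1 a u) (sum_nonneg fun b _ => hm _))
      (sum_nonneg fun _ _ => mapFst_nonneg hm g _)
  · exact hr.2 a₀
  · rw [← sum_div, sum_comm, div_eq_one_iff_eq h, margX_mapFst]
    exact sum_congr rfl fun a _ => by rw [← sum_mul, hr.2, one_mul]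

lemma ibJointIn_fiberAverage [Fintype A] [Fintype B] {m : A × B → ℝ} (hm : 0 ≤ m) (g : A → C)
    (r : A → Fin n → ℝ) (a₀ : A) :
    ibJointIn (mapFst m g) (fiberAverage m g r a₀) = mapSnd (ibJointIn m r) g :=
  funext fun z => fiberAverage_mul_margX hm g r a₀ z.2 z.1

/-- Since `g` is sufficient, the law of `B` given `A = a` depends only on `g a`, so averaging
the kernel over the fibers of `g` does not change the joint law of `(U, B)`. -/
lemma ibJointOut_fiberAverage [Fintype A] [Fintype B] [Fintype C] {m : A × B → ℝ} (hm : 0 ≤ m)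
    {g : A → C} (hg : SuffS m g) (r : A → Fin n → ℝ) (a₀ : A) :
    ibJointOut (mapFst m g) (fiberAverage m g r a₀) = ibJointOut m r := by
  funext ⟨u, b⟩
  simp only [ibJointOut]
  rw [← sum_fiberwise univ g (fun a => r a u * m (a, b))]
  refine sum_congr rfl fun c _ => ?_
  by_cases h : margX (mapFst m g) c = 0
  · have hz : ∀ a ∈ univ.filter (fun a => g a = c), m (a, b) = 0 :=
      fun a ha => eq_zero_of_margX_mapFst_eq_zero hm h (mem_filter.mp ha).2 b
    rw [mapFst, sum_eq_zero hz, mul_zero]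
    exact (sum_eq_zero fun a ha => by rw [hz a ha, mul_zero]).symm
  · refine mul_right_cancel₀ h ?_
    rw [mul_right_comm, fiberAverage_mul_margX hm, sum_mul, sum_mul]
    refine sum_congr rfl fun a ha => ?_
    obtain rfl := (mem_filter.mp ha).2
    rw [mul_assoc, mul_comm (margX m a), mapFst_mul_margX hg, mul_assoc]

lemma ibCurve_mapFst [Fintype A] [Nonempty A] [Fintype B] [Fintype C] {m : A × B → ℝ}
    (hm : 0 ≤ m) {g : A → C} (hg : SuffS m g) (R : ℝ) : ibCurve (mapFst m g) R = ibCurve m R :=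
  ibCurve_eq_of_simulates
    (fun _ r hr => ⟨fun a => r (g a), hr.comp g, (mutInfo_ibJointIn_comp hm g hr).le,
      congrArg mutInfo (ibJointOut_comp m g r)⟩)
    (fun _ r hr => ⟨fiberAverage m g r (Classical.arbitrary A),
      isStochastic_fiberAverage hm g hr _,
      by rw [ibJointIn_fiberAverage hm]; exact mutInfo_mapSnd_le (ibJointIn_nonneg hm hr) g,
      congrArg mutInfo (ibJointOut_fiberAverage hm hg r _)⟩) R

end InformationBottleneck

lemma margST_eq_mapSnd_mapFst [Fintype 𝒳] [Fintype 𝒴] (p : 𝒳 × 𝒴 → ℝ) (s : 𝒳 → 𝒮)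
    (t : 𝒴 → 𝒯) : margST p s t = mapSnd (mapFst p s) t :=
  funext fun _ => sum_comm

theorem ib_curve_preserved_general
    [Fintype 𝒳] [Nonempty 𝒳] [Fintype 𝒴]
    [Fintype 𝒮] [Fintype 𝒯]
    (p : 𝒳 × 𝒴 → ℝ) (hp : IsPMF p)
    (s : 𝒳 → 𝒮) (t : 𝒴 → 𝒯)
    (hs : SuffS p s) (ht : SuffT p t)
    (R : ℝ) :
    ibCurve p R = ibCurve (margST p s t) R := by
  rw [margST_eq_mapSnd_mapFst, ibCurve_mapSnd (mapFst_nonneg hp.1 s) (suffT_mapFst ht s),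
    ibCurve_mapFst hp.1 hs]

/-- The information-bottleneck curve is preserved under sufficient
statistics. -/
theorem ib_curve_preserved
    [Fintype 𝒳] [Nonempty 𝒳] [Fintype 𝒴] [Nonempty 𝒴]
    [Fintype 𝒮] [Nonempty 𝒮] [Fintype 𝒯] [Nonempty 𝒯]
    (p : 𝒳 × 𝒴 → ℝ) (hp : IsPMF p)
    (hX : ∀ x, 0 < margX p x) (hY : ∀ y, 0 < margY p y)
    (s : 𝒳 → 𝒮) (t : 𝒴 → 𝒯)
    (hs : SuffS p s) (ht : SuffT p t)
    (R : ℝ) (hR : 0 ≤ R) :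
    ibCurve p R = ibCurve (margST p s t) R :=
  ib_curve_preserved_general p hp s t hs ht R

end
end

section
/- For every R ≥ 0, ϑ_p(R) ≤ I_p(X;Y). Moreover, if s : 𝒳 → 𝒮 is sufficient, then equality is achieved at R = H(pS): ϑ_p(H(pS)) = I_p(X;Y). -/
open Finset

noncomputable section
open scoped Classical

variable {𝒳 𝒴 𝒮 𝒯 : Type*}

/-!
Pushing `X` through a channel `r` to `U`, every summand of `I(X;Y)` splits over `u`, and for each
`(u, y)` the log-sum inequality over `x` bounds the split sum below by the corresponding summand
of `I(U;Y)`; this is the data-processing inequality `I(U;Y) ≤ I(X;Y)`, hence `ϑ_p ≤ I(X;Y)`.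
The log-sum inequality is an equality when the ratios are constant in `x`. For the deterministic
channel `U = S` the ratios are `p(x,y) / (p(x) p(y))` on the fibre of `s`, constant there
precisely by sufficiency, so `I(S;Y) = I(X;Y)`, while the rate of this channel is `I(S;X) = H(S)`.
-/

open Finset Real

lemma mul_log_add_sub_le_mul_log_div {a b c : ℝ} (ha : 0 ≤ a) (hb : 0 ≤ b)
    (hab : b = 0 → a = 0) (hc : 0 < c) :
    a * log c + a - b * c ≤ a * log (a / b) := by
  rcases ha.eq_or_lt with rfl | ha
  · simpa using mul_nonneg hb hc.le
  have hb : 0 < b := hb.lt_of_ne fun h => ha.ne' (hab h.symm)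
  have key := mul_le_mul_of_nonneg_left
    (one_sub_inv_le_log_of_pos (show 0 < a / (b * c) by positivity)) ha.le
  rw [log_div ha.ne' (by positivity), log_mul hb.ne' hc.ne', inv_div,
    mul_sub, mul_one, mul_div_cancel₀ _ ha.ne'] at key
  rw [log_div ha.ne' hb.ne']
  linarith

section LogSum

variable {ι : Type*} (s : Finset ι) {a b : ι → ℝ}

theorem sum_mul_log_sum_div_sum_le (ha : ∀ i ∈ s, 0 ≤ a i) (hb : ∀ i ∈ s, 0 ≤ b i)
    (hab : ∀ i ∈ s, b i = 0 → a i = 0) :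
    (∑ i ∈ s, a i) * log ((∑ i ∈ s, a i) / ∑ i ∈ s, b i) ≤ ∑ i ∈ s, a i * log (a i / b i) := by
  rcases (sum_nonneg ha).eq_or_lt with hA | hA
  · have ha0 := (sum_eq_zero_iff_of_nonneg ha).1 hA.symm
    rw [← hA, zero_mul, sum_eq_zero fun i hi => by rw [ha0 i hi, zero_mul]]
  have hB : 0 < ∑ i ∈ s, b i := (sum_nonneg hb).lt_of_ne fun h =>
    hA.ne' (sum_eq_zero fun i hi => hab i hi ((sum_eq_zero_iff_of_nonneg hb).1 h.symm i hi))
  set c := (∑ i ∈ s, a i) / ∑ i ∈ s, b i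
  have hc : (∑ i ∈ s, b i) * c = ∑ i ∈ s, a i := mul_div_cancel₀ _ hB.ne'
  calc (∑ i ∈ s, a i) * log c = ∑ i ∈ s, (a i * log c + a i - b i * c) := by
        rw [sum_sub_distrib, sum_add_distrib, ← sum_mul, ← sum_mul, hc]
        ring
    _ ≤ _ := sum_le_sum fun i hi =>
        mul_log_add_sub_le_mul_log_div (ha i hi) (hb i hi) (hab i hi) (div_pos hA hB)

theorem sum_mul_log_div_eq_of_proportional (ha : ∀ i ∈ s, 0 ≤ a i) (hb : ∀ i ∈ s, 0 ≤ b i)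
    (hab : ∀ i ∈ s, b i = 0 → a i = 0) (hprop : ∀ i ∈ s, ∀ j ∈ s, a i * b j = a j * b i) :
    ∑ i ∈ s, a i * log (a i / b i) =
      (∑ i ∈ s, a i) * log ((∑ i ∈ s, a i) / ∑ i ∈ s, b i) := by
  rw [sum_mul]
  refine sum_congr rfl fun i hi => ?_
  rcases (ha i hi).eq_or_lt with h | hai
  · rw [← h, zero_mul, zero_mul]
  have hbi : 0 < b i := (hb i hi).lt_of_ne fun h => hai.ne' (hab i hi h.symm)
  have hB : 0 < ∑ j ∈ s, b j := hbi.trans_le (single_le_sum hb hi)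
  congr 2
  rw [div_eq_div_iff hbi.ne' hB.ne', mul_sum, sum_mul]
  exact sum_congr rfl fun j hj => hprop i hi j hj

end LogSum

lemma ite_pos_mul_eq_mul {x y : ℝ} (hx : 0 ≤ x) : (if 0 < x then x * y else 0) = x * y := by
  rcases hx.eq_or_lt with h | h
  · simp [← h]
  · simp [h]

variable {A B C : Type*} {q : A × B → ℝ}

section Marginals

lemma margX_nonneg [Fintype B] (hq : ∀ z, 0 ≤ q z) (a : A) : 0 ≤ margX q a :=
  sum_nonneg fun _ _ => hq _

lemma margY_nonneg [Fintype A] (hq : ∀ z, 0 ≤ q z) (b : B) : 0 ≤ margY q b :=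
  sum_nonneg fun _ _ => hq _

variable [Fintype A] [Fintype B]

lemma sum_margX (hq : IsPMF q) : ∑ a, margX q a = 1 := by
  rw [← hq.2, Fintype.sum_prod_type]; rfl

lemma mul_eq_zero_of_mul_margX_mul_margY_eq_zero (hq : ∀ z, 0 ≤ q z) {t : ℝ} {a : A} {b : B}
    (h : t * (margX q a * margY q b) = 0) : t * q (a, b) = 0 := by
  rcases mul_eq_zero.1 h with h | h
  · rw [h, zero_mul]
  rcases mul_eq_zero.1 h with h | h
  · rw [(sum_eq_zero_iff_of_nonneg fun b _ => hq (a, b)).1 h b (mem_univ _), mul_zero]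
  · rw [(sum_eq_zero_iff_of_nonneg fun a _ => hq (a, b)).1 h a (mem_univ _), mul_zero]

lemma margS_nonneg {S : Type*} (hq : ∀ z, 0 ≤ q z) (s : A → S) (t : S) : 0 ≤ margS q s t :=
  sum_nonneg fun a _ => margX_nonneg hq a

lemma margS_le_one {S : Type*} (hq : IsPMF q) (s : A → S) (t : S) : margS q s t ≤ 1 :=
  (sum_le_sum_of_subset_of_nonneg (filter_subset _ _) fun a _ _ => margX_nonneg hq.1 a).trans
    (sum_margX hq).le

lemma mutInfo_eq_sum_mul_log (hq : ∀ z, 0 ≤ q z) :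
    mutInfo q = ∑ z, q z * log (q z / (margX q z.1 * margY q z.2)) :=
  sum_congr rfl fun z _ => ite_pos_mul_eq_mul (hq z)

lemma mutInfo_mul_eq_zero {u : A → ℝ} {v : B → ℝ} (hu : ∑ a, u a = 1) (hv : ∑ b, v b = 1) :
    mutInfo (fun z : A × B => u z.1 * v z.2) = 0 := by
  refine sum_eq_zero fun z _ => ?_
  dsimp only
  rw [← mul_sum, ← sum_mul, hu, hv, mul_one, one_mul]
  by_cases h : u z.1 * v z.2 = 0 <;> simp [h]

end Marginals

section Channels

/-- The joint law of `(U, Y)` when `U` is drawn from `r X` and `(X, Y) ∼ q`. -/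
def pushFst [Fintype A] (r : A → C → ℝ) (q : A × B → ℝ) : C × B → ℝ :=
  fun z => ∑ a, r a z.1 * q (a, z.2)

def detKernel (f : A → C) : A → C → ℝ := fun a c => if f a = c then 1 else 0

lemma detKernel_nonneg (f : A → C) (a : A) (c : C) : 0 ≤ detKernel f a c := by
  unfold detKernel; split_ifs <;> norm_num

lemma sum_detKernel [Fintype C] (f : A → C) (a : A) : ∑ c, detKernel f a c = 1 := by
  simp [detKernel]

variable {r : A → C → ℝ}

lemma pushFst_nonneg [Fintype A] (hq : ∀ z, 0 ≤ q z) (hr0 : ∀ a c, 0 ≤ r a c) (z : C × B) :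
    0 ≤ pushFst r q z :=
  sum_nonneg fun a _ => mul_nonneg (hr0 a z.1) (hq _)

lemma margX_pushFst [Fintype A] [Fintype B] (c : C) :
    margX (pushFst r q) c = ∑ a, r a c * margX q a := by
  simp only [margX, pushFst, mul_sum]
  exact sum_comm

lemma margY_pushFst [Fintype A] [Fintype C] (hr1 : ∀ a, ∑ c, r a c = 1) (b : B) :
    margY (pushFst r q) b = margY q b := by
  simp only [margY, pushFst]
  rw [sum_comm]
  simp only [← sum_mul, hr1, one_mul]

variable [Fintype A] [Fintype B] [Fintype C]

lemma mutInfo_eq_sum_channel (hq : ∀ z, 0 ≤ q z) (hr1 : ∀ a, ∑ c, r a c = 1) :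
    mutInfo q = ∑ c, ∑ b, ∑ a,
      r a c * q (a, b) * log (r a c * q (a, b) / (r a c * (margX q a * margY q b))) := by
  have hsplit : ∀ a b, q (a, b) * log (q (a, b) / (margX q a * margY q b)) = ∑ c,
      r a c * q (a, b) * log (r a c * q (a, b) / (r a c * (margX q a * margY q b))) := by
    intro a b
    have cancel : ∀ c, r a c * q (a, b) * log (r a c * q (a, b) / (r a c * (margX q a * margY q b)))
        = r a c * (q (a, b) * log (q (a, b) / (margX q a * margY q b))) := by
      intro c
      rcases eq_or_ne (r a c) 0 with h | h
      · simp [h]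
      · rw [mul_div_mul_left _ _ h, mul_assoc]
    rw [sum_congr rfl fun c _ => cancel c, ← sum_mul, hr1, one_mul]
  rw [mutInfo_eq_sum_mul_log hq, Fintype.sum_prod_type]
  simp only [hsplit]
  rw [sum_comm]
  exact (sum_congr rfl fun b _ => sum_comm).trans sum_comm

lemma mutInfo_pushFst_eq_sum (hq : ∀ z, 0 ≤ q z) (hr0 : ∀ a c, 0 ≤ r a c)
    (hr1 : ∀ a, ∑ c, r a c = 1) :
    mutInfo (pushFst r q) = ∑ c, ∑ b, (∑ a, r a c * q (a, b)) *
      log ((∑ a, r a c * q (a, b)) / ∑ a, r a c * (margX q a * margY q b)) := by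
  rw [mutInfo_eq_sum_mul_log (pushFst_nonneg hq hr0), Fintype.sum_prod_type]
  refine sum_congr rfl fun c _ => sum_congr rfl fun b _ => ?_
  rw [margX_pushFst, margY_pushFst hr1, sum_mul]
  simp only [mul_assoc]
  rfl

theorem mutInfo_pushFst_le (hq : ∀ z, 0 ≤ q z) (hr0 : ∀ a c, 0 ≤ r a c)
    (hr1 : ∀ a, ∑ c, r a c = 1) : mutInfo (pushFst r q) ≤ mutInfo q := by
  rw [mutInfo_pushFst_eq_sum hq hr0 hr1, mutInfo_eq_sum_channel hq hr1]
  exact sum_le_sum fun c _ => sum_le_sum fun b _ =>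
    sum_mul_log_sum_div_sum_le _ (fun a _ => mul_nonneg (hr0 a c) (hq _))
      (fun a _ => mul_nonneg (hr0 a c) (mul_nonneg (margX_nonneg hq a) (margY_nonneg hq b)))
      (fun _ _ => mul_eq_zero_of_mul_margX_mul_margY_eq_zero hq)

theorem mutInfo_pushFst_detKernel_of_suffS (hq : ∀ z, 0 ≤ q z) {f : A → C} (hf : SuffS q f) :
    mutInfo (pushFst (detKernel f) q) = mutInfo q := by
  rw [mutInfo_pushFst_eq_sum hq (detKernel_nonneg f) (sum_detKernel f),
    mutInfo_eq_sum_channel hq (sum_detKernel f)]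
  refine sum_congr rfl fun c _ => sum_congr rfl fun b _ =>
    (sum_mul_log_div_eq_of_proportional _ (fun a _ => mul_nonneg (detKernel_nonneg f a c) (hq _))
      (fun a _ => mul_nonneg (detKernel_nonneg f a c)
        (mul_nonneg (margX_nonneg hq a) (margY_nonneg hq b)))
      (fun _ _ => mul_eq_zero_of_mul_margX_mul_margY_eq_zero hq) fun a _ a' _ => ?_).symm
  unfold detKernel
  split_ifs with ha ha'
  · linear_combination margY q b * hf a a' b (ha.trans ha'.symm)
  all_goals simp

theorem mutInfo_detKernel_mul (f : A → C) {w : A → ℝ} (hw : ∀ a, 0 ≤ w a) :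
    mutInfo (fun z : C × A => detKernel f z.2 z.1 * w z.2) =
      entropy (fun c => ∑ a ∈ univ.filter (fun a => f a = c), w a) := by
  set W := fun c => ∑ a ∈ univ.filter (fun a => f a = c), w a
  have term : ∀ c a, detKernel f a c * w a *
      log (detKernel f a c * w a / ((∑ a', detKernel f a' c * w a') * w a))
      = if f a = c then -(w a * log (W c)) else 0 := by
    intro c a
    simp only [detKernel, ite_mul, one_mul, zero_mul, ← sum_filter]
    split_ifs with h
    · subst h
      rcases (hw a).eq_or_lt with h0 | h0
      · simp [← h0]
      rw [div_mul_cancel_right₀ h0.ne', log_inv, mul_neg]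
    · simp
  rw [mutInfo_eq_sum_mul_log fun z => mul_nonneg (detKernel_nonneg f _ _) (hw _),
    Fintype.sum_prod_type]
  simp only [margX, margY, ← sum_mul, sum_detKernel, one_mul, term]
  simp only [← sum_filter, sum_neg_distrib, ← sum_mul]
  rw [entropy]
  exact congrArg Neg.neg
    (sum_congr rfl fun c _ => (ite_pos_mul_eq_mul (sum_nonneg fun a _ => hw a)).symm)

end Channels

section Entropy

variable {V W : Type*} [Fintype W]

lemma entropy_comp_equiv [Fintype V] (w : W → ℝ) (e : V ≃ W) : entropy (w ∘ e) = entropy w := by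
  unfold entropy
  rw [← Equiv.sum_comp e]
  rfl

lemma entropy_nonneg {w : W → ℝ} (h0 : ∀ x, 0 ≤ w x) (h1 : ∀ x, w x ≤ 1) : 0 ≤ entropy w :=
  neg_nonneg.2 <| sum_nonpos fun x _ => by
    rw [ite_pos_mul_eq_mul (h0 x)]
    exact mul_log_nonpos (h0 x) (h1 x)

lemma entropy_filter_comp_equiv [Fintype A] [Fintype V] (w : A → ℝ) (s : A → V) (e : V ≃ W) :
    entropy (fun t => ∑ a ∈ univ.filter (fun a => e (s a) = t), w a) =
      entropy (fun v => ∑ a ∈ univ.filter (fun a => s a = v), w a) := by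
  rw [← entropy_comp_equiv _ e.symm]
  congr 1
  funext t
  simp only [Function.comp, Equiv.eq_symm_apply]

end Entropy

section InformationBottleneck

variable [Fintype A] [Fintype B] {m : A × B → ℝ}

theorem mutInfo_pushFst_le_ibCurve (hm : ∀ z, 0 ≤ m z) {R : ℝ} {n : ℕ} {r : A → Fin n → ℝ}
    (hr0 : ∀ a u, 0 ≤ r a u) (hr1 : ∀ a, ∑ u, r a u = 1)
    (hR : mutInfo (fun z : Fin n × A => r z.2 z.1 * ∑ b, m (z.2, b)) ≤ R) :
    mutInfo (pushFst r m) ≤ ibCurve m R := by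
  refine le_csSup ⟨mutInfo m, ?_⟩ ⟨n, r, hr0, hr1, hR, rfl⟩
  rintro _ ⟨n, r, hr0, hr1, -, rfl⟩
  exact mutInfo_pushFst_le hm hr0 hr1

theorem ibCurve_le_mutInfo (hm : IsPMF m) {R : ℝ} (hR : 0 ≤ R) : ibCurve m R ≤ mutInfo m := by
  have hrate : mutInfo (fun z : Fin 1 × A => (1 : ℝ) * margX m z.2) = 0 :=
    mutInfo_mul_eq_zero (u := fun _ => 1) (by simp) (sum_margX hm)
  refine csSup_le ⟨_, 1, fun _ _ => 1, fun _ _ => zero_le_one, fun _ => by simp,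
    hrate.le.trans hR, rfl⟩ ?_
  rintro _ ⟨n, r, hr0, hr1, -, rfl⟩
  exact mutInfo_pushFst_le hm.1 hr0 hr1

end InformationBottleneck

theorem ib_curve_bound_and_achievability_general
    [Fintype 𝒳] [Fintype 𝒴]
    [Fintype 𝒮]
    (p : 𝒳 × 𝒴 → ℝ) (hp : IsPMF p)
    (s : 𝒳 → 𝒮) :
    (∀ R : ℝ, 0 ≤ R → ibCurve p R ≤ mutInfo p) ∧
    (SuffS p s → ibCurve p (entropy (margS p s)) = mutInfo p) := by
  refine ⟨fun R hR => ibCurve_le_mutInfo hp hR, fun hs => ?_⟩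
  -- `ibCurve` only admits `Fin n`-valued `U`, so `S` is relabelled.
  let f := Fintype.equivFin 𝒮 ∘ s
  have hrate : mutInfo (fun z : Fin _ × 𝒳 => detKernel f z.2 z.1 * margX p z.2) =
      entropy (margS p s) := by
    rw [mutInfo_detKernel_mul f (margX_nonneg hp.1)]
    exact entropy_filter_comp_equiv _ s _
  have hf : SuffS p f := fun x x' y h => hs x x' y ((Fintype.equivFin 𝒮).injective h)
  refine le_antisymm
    (ibCurve_le_mutInfo hp (entropy_nonneg (margS_nonneg hp.1 s) (margS_le_one hp s))) ?_
  calc mutInfo p = mutInfo (pushFst (detKernel f) p) :=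
        (mutInfo_pushFst_detKernel_of_suffS hp.1 hf).symm
    _ ≤ _ := mutInfo_pushFst_le_ibCurve hp.1 (detKernel_nonneg f) (sum_detKernel f) hrate.le

/-- The information-bottleneck curve is bounded by `I(X;Y)`, with
equality at rate `R = H(S)` whenever `s` is sufficient. -/
theorem ib_curve_bound_and_achievability
    [Fintype 𝒳] [Nonempty 𝒳] [Fintype 𝒴] [Nonempty 𝒴]
    [Fintype 𝒮] [Nonempty 𝒮]
    (p : 𝒳 × 𝒴 → ℝ) (hp : IsPMF p)
    (hX : ∀ x, 0 < margX p x) (hY : ∀ y, 0 < margY p y)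
    (s : 𝒳 → 𝒮) :
    (∀ R : ℝ, 0 ≤ R → ibCurve p R ≤ mutInfo p) ∧
    (SuffS p s → ibCurve p (entropy (margS p s)) = mutInfo p) :=
  ib_curve_bound_and_achievability_general p hp s
end
end
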